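/- Let I be a homogeneous ideal in K[x_0,…,x_n] and let w, v ∈ Γ^{n+1}. Then there exists ε > 0 such that for all ε' ∈ Γ with 0 < ε' < ε one has in_v(in_w(I)) = in_{w+ε'v}(I) as ideals of k[x_0,…,x_n]. -/

import Mathlib

open MvPolynomial
open scoped Classical

noncomputable section

/-- Dot product `w·u` of a real weight vector with a nonnegative exponent vector. -/
def dotN {m : ℕ} (w : Fin m → ℝ) (u : Fin m →₀ ℕ) : ℝ := ∑ i, w i * (u i : ℝ)

/-- Dot product `w·u` of a real weight vector with an integer exponent vector. -/
def dotZ {n : ℕ} (w : Fin n → ℝ) (u : Fin n → ℤ) : ℝ := ∑ i, w i * (u i : ℝ)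

/-- Dot product of two real vectors. -/
def dotR {m : ℕ} (c x : Fin m → ℝ) : ℝ := ∑ i, c i * x i

/-- A field `K` together with: a nontrivial real-valued (additive) valuation
`val : K* → ℝ` (recorded as a function on `K`, constrained only at nonzero elements);
a residue field `𝕜` with the reduction map `res : K → 𝕜` (the canonical map
`R → 𝕜 = R/𝔪` on the valuation ring `R = {a : val a ≥ 0}`, junk elsewhere); and a fixed
splitting `t` of the valuation, i.e. a group-homomorphic section `w ↦ t^w` of `val`
defined on the value group `Γ = im val`. -/
structure ValSetup (K 𝕜 : Type) [Field K] [Field 𝕜] where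
  val : K → ℝ
  val_mul : ∀ {a b : K}, a ≠ 0 → b ≠ 0 → val (a * b) = val a + val b
  val_add : ∀ {a b : K}, a ≠ 0 → b ≠ 0 → a + b ≠ 0 → min (val a) (val b) ≤ val (a + b)
  val_one : val 1 = 0
  val_nontrivial : ∃ a : K, a ≠ 0 ∧ val a ≠ 0
  res : K → 𝕜
  res_add : ∀ {a b : K}, (a = 0 ∨ 0 ≤ val a) → (b = 0 ∨ 0 ≤ val b) → res (a + b) = res a + res b
  res_mul : ∀ {a b : K}, (a = 0 ∨ 0 ≤ val a) → (b = 0 ∨ 0 ≤ val b) → res (a * b) = res a * res b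
  res_one : res 1 = 1
  res_zero : res 0 = 0
  res_eq_zero_iff : ∀ {a : K}, a ≠ 0 → 0 ≤ val a → (res a = 0 ↔ 0 < val a)
  res_surjective : ∀ c : 𝕜, ∃ a : K, (a = 0 ∨ 0 ≤ val a) ∧ res a = c
  t : ℝ → K
  t_ne_zero : ∀ {r : ℝ}, (∃ a : K, a ≠ 0 ∧ val a = r) → t r ≠ 0
  t_add : ∀ {r₁ r₂ : ℝ}, (∃ a : K, a ≠ 0 ∧ val a = r₁) → (∃ a : K, a ≠ 0 ∧ val a = r₂) →
    t (r₁ + r₂) = t r₁ * t r₂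
  val_t : ∀ {r : ℝ}, (∃ a : K, a ≠ 0 ∧ val a = r) → val (t r) = r

namespace ValSetup

variable {K 𝕜 : Type} [Field K] [Field 𝕜]

/-- The value group `Γ = val(K*) ⊆ ℝ`. -/
def Gamma (V : ValSetup K 𝕜) : Set ℝ := {r : ℝ | ∃ a : K, a ≠ 0 ∧ V.val a = r}

/-- `trop(f)(w) = min { val(c_u) + w·u : c_u ≠ 0 }` for `f = Σ_u c_u x^u ∈ K[x_0,…,x_{m-1}]`. -/
def trop (V : ValSetup K 𝕜) {m : ℕ} (f : MvPolynomial (Fin m) K) (w : Fin m → ℝ) : ℝ :=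
  sInf ((fun u => V.val (coeff u f) + dotN w u) '' (f.support : Set (Fin m →₀ ℕ)))

/-- The initial form `in_w(f) = Σ_{val(c_u)+w·u = trop(f)(w)} (t^{-val(c_u)} c_u)‾ x^u`
in `𝕜[x_0,…,x_{m-1}]`. -/
def initialForm (V : ValSetup K 𝕜) {m : ℕ} (w : Fin m → ℝ) (f : MvPolynomial (Fin m) K) :
    MvPolynomial (Fin m) 𝕜 :=
  ∑ u ∈ f.support.filter (fun u => V.val (coeff u f) + dotN w u = V.trop f w),
    monomial u (V.res (V.t (-(V.val (coeff u f))) * coeff u f))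

/-- The initial ideal `in_w(I) = ⟨in_w(f) : f ∈ I⟩ ⊆ 𝕜[x_0,…,x_{m-1}]`. -/
def initialIdeal (V : ValSetup K 𝕜) {m : ℕ} (w : Fin m → ℝ)
    (I : Ideal (MvPolynomial (Fin m) K)) : Ideal (MvPolynomial (Fin m) 𝕜) :=
  Ideal.span {g | ∃ f ∈ I, g = V.initialForm w f}

/-- The Gröbner region `C_I[w] = {w' ∈ Γ^m : in_{w'}(I) = in_w(I)}`. -/
def groebnerRegion (V : ValSetup K 𝕜) {m : ℕ} (I : Ideal (MvPolynomial (Fin m) K))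
    (w : Fin m → ℝ) : Set (Fin m → ℝ) :=
  {w' | (∀ i, w' i ∈ V.Gamma) ∧ V.initialIdeal w' I = V.initialIdeal w I}

end ValSetup

/-- `trop(g)(v) = min { v·u : c_u ≠ 0 }` for `g ∈ 𝕜[x]`, w.r.t. the trivial valuation on `𝕜`. -/
def tropTriv {𝕜 : Type} [Field 𝕜] {m : ℕ} (g : MvPolynomial (Fin m) 𝕜) (v : Fin m → ℝ) : ℝ :=
  sInf ((fun u => dotN v u) '' (g.support : Set (Fin m →₀ ℕ)))

/-- Initial form `in_v(g)`, w.r.t. the trivial valuation on the residue field: the sum of the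
terms of `g` whose exponents `u` minimize `v·u`. -/
def initialFormTriv {𝕜 : Type} [Field 𝕜] {m : ℕ} (v : Fin m → ℝ) (g : MvPolynomial (Fin m) 𝕜) :
    MvPolynomial (Fin m) 𝕜 :=
  ∑ u ∈ g.support.filter (fun u => dotN v u = tropTriv g v), monomial u (coeff u g)

/-- Initial ideal `in_v(J) = ⟨in_v(g) : g ∈ J⟩` w.r.t. the trivial valuation. -/
def initialIdealTriv {𝕜 : Type} [Field 𝕜] {m : ℕ} (v : Fin m → ℝ)
    (J : Ideal (MvPolynomial (Fin m) 𝕜)) : Ideal (MvPolynomial (Fin m) 𝕜) :=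
  Ideal.span {h | ∃ g ∈ J, h = initialFormTriv v g}

/-- A homogeneous ideal of `R[x_0,…,x_{m-1}]`: one containing all homogeneous components of
its elements. -/
def IsHomogIdeal {R : Type} [CommSemiring R] {m : ℕ} (I : Ideal (MvPolynomial (Fin m) R)) :
    Prop :=
  ∀ f ∈ I, ∀ d : ℕ, homogeneousComponent d f ∈ I

/-- A monomial ideal: an ideal generated by monomials. -/
def IsMonomialIdeal {R : Type} [CommSemiring R] {m : ℕ} (J : Ideal (MvPolynomial (Fin m) R)) :
    Prop :=
  ∃ S : Set (Fin m →₀ ℕ), J = Ideal.span ((fun u => (monomial u 1 : MvPolynomial (Fin m) R)) '' S)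

/-!
For a single polynomial `f` and small `ε > 0`, the exponents minimizing the `(w + εv)`-level
`val c_u + (w + εv)·u` are those minimizing the `w`-level first and `v·u` second, so
`in_{w+εv}(f) = in_v(in_w(f))`. Since `w ∈ Γ^{n+1}` and the residue map is onto, every element of
`in_w(I)` is itself an initial form, so `in_v(in_w(I))` is generated by the `in_v(in_w(f))`, and
by Noetherianity finitely many suffice: hence `in_v(in_w(I)) ⊆ in_{w+εv}(I)` for small `ε`.
Equality is a dimension count in each degree: for a homogeneous ideal, passing to initial forms
preserves the dimension of every graded piece, so `in_{w+εv}(I)`, `I`, `in_w(I)` and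
`in_v(in_w(I))` all have pieces of the same dimension.
-/

open Filter Topology

lemma dotN_add {m : ℕ} (w : Fin m → ℝ) (u₁ u₂ : Fin m →₀ ℕ) :
    dotN w (u₁ + u₂) = dotN w u₁ + dotN w u₂ := by
  simp only [dotN, Finsupp.add_apply, Nat.cast_add, mul_add, Finset.sum_add_distrib]

lemma dotN_add_smul {m : ℕ} (w v : Fin m → ℝ) (ε : ℝ) (u : Fin m →₀ ℕ) :
    dotN (w + ε • v) u = dotN w u + ε * dotN v u := by
  simp only [dotN, Pi.add_apply, Pi.smul_apply, smul_eq_mul, add_mul, Finset.sum_add_distrib,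
    Finset.mul_sum, mul_assoc]

lemma finrank_le_finrank_inf_ker_add_one {F V : Type*} [Field F] [AddCommGroup V] [Module F V]
    (W : Submodule F V) [FiniteDimensional F W] (ℓ : V →ₗ[F] F) :
    Module.finrank F W ≤ Module.finrank F ↥(W ⊓ LinearMap.ker ℓ) + 1 := by
  have h := LinearMap.finrank_range_add_finrank_ker (ℓ.domRestrict W)
  have hrange : Module.finrank F (LinearMap.range (ℓ.domRestrict W)) ≤ 1 :=
    (Submodule.finrank_le _).trans (Module.finrank_self F).le
  rw [LinearMap.ker_domRestrict, ← Submodule.finrank_map_subtype_eq,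
    Submodule.map_comap_subtype] at h
  omega

lemma eventually_add_mul_le_add_mul_iff (a a' b b' : ℝ) :
    ∀ᶠ ε in 𝓝[>] (0 : ℝ), (a + ε * b ≤ a' + ε * b' ↔ a < a' ∨ a = a' ∧ b ≤ b') := by
  have hgap : Tendsto (fun ε => a' + ε * b' - (a + ε * b)) (𝓝[>] 0) (𝓝 (a' - a)) := by
    have h : Continuous fun ε : ℝ => a' + ε * b' - (a + ε * b) := by fun_prop
    simpa using (h.tendsto 0).mono_left nhdsWithin_le_nhds
  rcases lt_trichotomy a a' with h | rfl | h
  · filter_upwards [hgap.eventually (lt_mem_nhds (sub_pos.mpr h))] with ε hε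
    exact iff_of_true (by linarith) (.inl h)
  · filter_upwards [self_mem_nhdsWithin] with ε (hε : 0 < ε)
    simp only [add_le_add_iff_left, mul_le_mul_iff_right₀ hε, lt_irrefl, true_and, false_or]
  · filter_upwards [hgap.eventually (gt_mem_nhds (sub_neg.mpr h))] with ε hε
    exact iff_of_false (by linarith) (by rintro (h' | ⟨h', -⟩) <;> linarith)

lemma eventually_isMinOn_add_mul_iff {α : Type*} (S : Finset α) (A B : α → ℝ) :
    ∀ᶠ ε in 𝓝[>] (0 : ℝ), ∀ x ∈ S, (IsMinOn (fun y => A y + ε * B y) S x ↔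
      IsMinOn A S x ∧ IsMinOn B {y | y ∈ S ∧ IsMinOn A S y} x) := by
  have hlex := (eventually_all_finset (S ×ˢ S)).mpr fun p _ =>
    eventually_add_mul_le_add_mul_iff (A p.1) (A p.2) (B p.1) (B p.2)
  filter_upwards [hlex] with ε hε x hx
  have hxy : ∀ y ∈ S, (A x + ε * B x ≤ A y + ε * B y ↔ A x < A y ∨ A x = A y ∧ B x ≤ B y) :=
    fun y hy => hε (x, y) (Finset.mem_product.mpr ⟨hx, hy⟩)
  simp only [isMinOn_iff, Finset.mem_coe, Set.mem_ofPred_eq]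
  constructor
  · intro h
    refine ⟨fun y hy => ?_, fun y ⟨hy, hmin⟩ => ?_⟩
    · rcases (hxy y hy).mp (h y hy) with h' | ⟨h', -⟩ <;> linarith
    · rcases (hxy y hy).mp (h y hy) with h' | ⟨-, h'⟩
      · linarith [hmin x hx]
      · exact h'
  · rintro ⟨hA, hB⟩ y hy
    rcases (hA y hy).lt_or_eq with h' | h'
    · exact (hxy y hy).mpr (.inl h')
    · exact (hxy y hy).mpr (.inr ⟨h', hB y ⟨hy, fun z hz => h' ▸ hA z hz⟩⟩)

section HomogeneousPiece

variable {R : Type} {m : ℕ}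

def homogeneousPiece [CommSemiring R] (I : Ideal (MvPolynomial (Fin m) R)) (d : ℕ) :
    Submodule R (MvPolynomial (Fin m) R) :=
  I.restrictScalars R ⊓ homogeneousSubmodule (Fin m) R d

instance [Field R] (d : ℕ) : FiniteDimensional R (homogeneousSubmodule (Fin m) R d) :=
  Module.Finite.iff_fg.mpr (homogeneousSubmodule_fg _ _ d)

instance [Field R] (I : Ideal (MvPolynomial (Fin m) R)) (d : ℕ) :
    FiniteDimensional R (homogeneousPiece I d) :=
  Submodule.finiteDimensional_of_le inf_le_right

lemma eq_of_le_of_finrank_homogeneousPiece_le [Field R] {J J' : Ideal (MvPolynomial (Fin m) R)}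
    (hle : J ≤ J') (hJ' : IsHomogIdeal J')
    (h : ∀ d, Module.finrank R (homogeneousPiece J' d) ≤ Module.finrank R (homogeneousPiece J d)) :
    J = J' := by
  refine le_antisymm hle fun x hx => ?_
  rw [← sum_homogeneousComponent x]
  refine J.sum_mem fun d _ => ?_
  have hpiece : homogeneousPiece J d = homogeneousPiece J' d :=
    Submodule.eq_of_le_of_finrank_le (inf_le_inf_right _ hle) (h d)
  have hxd : homogeneousComponent d x ∈ homogeneousPiece J' d :=
    ⟨hJ' x hx d, homogeneousComponent_isHomogeneous d x⟩
  exact (hpiece ▸ hxd).1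

end HomogeneousPiece

/-- The axioms of `ValSetup` without nontriviality of `val` and surjectivity of `res`, so that
the trivial valuation on `𝕜` is an instance too. -/
structure SplitValuation (K 𝕜 : Type) [Field K] [Field 𝕜] where
  val : K → ℝ
  val_mul : ∀ {a b : K}, a ≠ 0 → b ≠ 0 → val (a * b) = val a + val b
  val_add : ∀ {a b : K}, a ≠ 0 → b ≠ 0 → a + b ≠ 0 → min (val a) (val b) ≤ val (a + b)
  val_one : val 1 = 0
  res : K → 𝕜
  res_add : ∀ {a b : K}, (a = 0 ∨ 0 ≤ val a) → (b = 0 ∨ 0 ≤ val b) → res (a + b) = res a + res b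
  res_mul : ∀ {a b : K}, (a = 0 ∨ 0 ≤ val a) → (b = 0 ∨ 0 ≤ val b) → res (a * b) = res a * res b
  res_one : res 1 = 1
  res_zero : res 0 = 0
  res_eq_zero_iff : ∀ {a : K}, a ≠ 0 → 0 ≤ val a → (res a = 0 ↔ 0 < val a)
  t : ℝ → K
  t_ne_zero : ∀ {r : ℝ}, (∃ a : K, a ≠ 0 ∧ val a = r) → t r ≠ 0
  t_add : ∀ {r₁ r₂ : ℝ}, (∃ a : K, a ≠ 0 ∧ val a = r₁) → (∃ a : K, a ≠ 0 ∧ val a = r₂) →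
    t (r₁ + r₂) = t r₁ * t r₂
  val_t : ∀ {r : ℝ}, (∃ a : K, a ≠ 0 ∧ val a = r) → val (t r) = r

def ValSetup.toSplitValuation {K 𝕜 : Type} [Field K] [Field 𝕜] (V : ValSetup K 𝕜) :
    SplitValuation K 𝕜 :=
  { V with }

namespace SplitValuation

variable {K 𝕜 : Type} [Field K] [Field 𝕜] (P : SplitValuation K 𝕜) {m : ℕ}

def trivial (𝕜 : Type) [Field 𝕜] : SplitValuation 𝕜 𝕜 where
  val _ := 0
  val_mul _ _ := (add_zero 0).symm
  val_add _ _ _ := le_of_eq (min_self 0)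
  val_one := rfl
  res := id
  res_add _ _ := rfl
  res_mul _ _ := rfl
  res_one := rfl
  res_zero := rfl
  res_eq_zero_iff ha _ := by simpa using ha
  t _ := 1
  t_ne_zero _ := one_ne_zero
  t_add _ _ := (one_mul 1).symm
  val_t := by rintro _ ⟨_, _, rfl⟩; rfl

@[simp]
lemma trivial_val (c : 𝕜) : (trivial 𝕜).val c = 0 := rfl

lemma val_inv {a : K} (ha : a ≠ 0) : P.val a⁻¹ = -P.val a := by
  have h := P.val_mul ha (inv_ne_zero ha)
  rw [mul_inv_cancel₀ ha, P.val_one] at h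
  linarith

def valueGroup : AddSubgroup ℝ where
  carrier := {r | ∃ a : K, a ≠ 0 ∧ P.val a = r}
  zero_mem' := ⟨1, one_ne_zero, P.val_one⟩
  add_mem' := by
    rintro _ _ ⟨a, ha, rfl⟩ ⟨b, hb, rfl⟩
    exact ⟨a * b, mul_ne_zero ha hb, P.val_mul ha hb⟩
  neg_mem' := by
    rintro _ ⟨a, ha, rfl⟩
    exact ⟨a⁻¹, inv_ne_zero ha, P.val_inv ha⟩

def ResSurjective : Prop := ∀ c : 𝕜, ∃ a : K, (a = 0 ∨ 0 ≤ P.val a) ∧ P.res a = c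

lemma val_mem_valueGroup {a : K} (ha : a ≠ 0) : P.val a ∈ P.valueGroup := ⟨a, ha, rfl⟩

lemma dotN_mem_valueGroup {w : Fin m → ℝ} (hw : ∀ i, w i ∈ P.valueGroup) (u : Fin m →₀ ℕ) :
    dotN w u ∈ P.valueGroup :=
  P.valueGroup.sum_mem fun i _ => by
    rw [mul_comm, ← nsmul_eq_mul]
    exact P.valueGroup.nsmul_mem (hw i) _

lemma t_zero : P.t 0 = 1 := by
  have h := P.t_add P.valueGroup.zero_mem P.valueGroup.zero_mem
  rw [add_zero] at h
  exact (mul_eq_left₀ (P.t_ne_zero P.valueGroup.zero_mem)).mp h.symm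

lemma t_mul_t_neg {r : ℝ} (hr : r ∈ P.valueGroup) : P.t r * P.t (-r) = 1 := by
  rw [← P.t_add hr (P.valueGroup.neg_mem hr), add_neg_cancel, P.t_zero]

lemma val_t_mul {r : ℝ} (hr : r ∈ P.valueGroup) {a : K} (ha : a ≠ 0) :
    P.t r * a ≠ 0 ∧ P.val (P.t r * a) = r + P.val a :=
  ⟨mul_ne_zero (P.t_ne_zero hr) ha, by rw [P.val_mul (P.t_ne_zero hr) ha, P.val_t hr]⟩

lemma le_val_add {a b : K} {s : ℝ} (ha : a ≠ 0 → s ≤ P.val a) (hb : b ≠ 0 → s ≤ P.val b) :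
    a + b ≠ 0 → s ≤ P.val (a + b) := by
  intro hab
  rcases eq_or_ne a 0 with rfl | ha0
  · simpa using hb (by simpa using hab)
  rcases eq_or_ne b 0 with rfl | hb0
  · simpa using ha ha0
  exact (le_min (ha ha0) (hb hb0)).trans (P.val_add ha0 hb0 hab)

lemma le_val_sum {ι : Type*} (S : Finset ι) (g : ι → K) {s : ℝ}
    (h : ∀ i ∈ S, g i ≠ 0 → s ≤ P.val (g i)) : ∑ i ∈ S, g i ≠ 0 → s ≤ P.val (∑ i ∈ S, g i) := by
  classical
  induction S using Finset.induction_on with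
  | empty => simp
  | insert i S hi ih =>
    rw [Finset.sum_insert hi]
    exact P.le_val_add (h i (S.mem_insert_self i))
      (ih fun j hj => h j (Finset.mem_insert_of_mem hj))

def initCoeff (c : K) : 𝕜 := P.res (P.t (-P.val c) * c)

lemma initCoeff_zero : P.initCoeff 0 = 0 := by rw [initCoeff, mul_zero, P.res_zero]

lemma initCoeff_one : P.initCoeff 1 = 1 := by
  rw [initCoeff, P.val_one, neg_zero, mul_one, P.t_zero, P.res_one]

lemma val_t_neg_val_mul {c : K} (hc : c ≠ 0) :
    P.t (-P.val c) * c ≠ 0 ∧ P.val (P.t (-P.val c) * c) = 0 := by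
  obtain ⟨h, hv⟩ := P.val_t_mul (P.valueGroup.neg_mem (P.val_mem_valueGroup hc)) hc
  exact ⟨h, by rw [hv, neg_add_cancel]⟩

lemma initCoeff_ne_zero {c : K} (hc : c ≠ 0) : P.initCoeff c ≠ 0 := by
  obtain ⟨h, hv⟩ := P.val_t_neg_val_mul hc
  rw [initCoeff, Ne, P.res_eq_zero_iff h hv.ge, hv]
  exact lt_irrefl 0

lemma initCoeff_mul (a b : K) : P.initCoeff (a * b) = P.initCoeff a * P.initCoeff b := by
  rcases eq_or_ne a 0 with rfl | ha
  · rw [zero_mul, initCoeff_zero, zero_mul]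
  rcases eq_or_ne b 0 with rfl | hb
  · rw [mul_zero, initCoeff_zero, mul_zero]
  have hva := P.valueGroup.neg_mem (P.val_mem_valueGroup ha)
  have hvb := P.valueGroup.neg_mem (P.val_mem_valueGroup hb)
  rw [initCoeff, P.val_mul ha hb, neg_add, P.t_add hva hvb,
    mul_mul_mul_comm, P.res_mul (.inr (P.val_t_neg_val_mul ha).2.ge)
      (.inr (P.val_t_neg_val_mul hb).2.ge)]
  rfl

lemma trivial_initCoeff (c : 𝕜) : (trivial 𝕜).initCoeff c = c := one_mul c

/-- Unlike `res (t (-s) * c)`, this is meaningful for every real `s`; the two agree when `s ∈ Γ`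
and `val c ≥ s` (`reduceAt_eq_res`). -/
def reduceAt (s : ℝ) (c : K) : 𝕜 := if c ≠ 0 ∧ P.val c = s then P.initCoeff c else 0

lemma reduceAt_zero (s : ℝ) : P.reduceAt s 0 = 0 := if_neg fun h => h.1 rfl

lemma reduceAt_of_val_eq {s : ℝ} {c : K} (hc : c ≠ 0) (h : P.val c = s) :
    P.reduceAt s c = P.initCoeff c :=
  if_pos ⟨hc, h⟩

lemma reduceAt_of_val_ne {s : ℝ} {c : K} (h : P.val c ≠ s) : P.reduceAt s c = 0 :=
  if_neg fun h' => h h'.2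

lemma reduceAt_ne_zero_iff {s : ℝ} {c : K} : P.reduceAt s c ≠ 0 ↔ c ≠ 0 ∧ P.val c = s := by
  unfold reduceAt
  split_ifs with h
  · exact iff_of_true (P.initCoeff_ne_zero h.1) h
  · exact iff_of_false (not_not.mpr rfl) h

lemma reduceAt_eq_res {s : ℝ} (hs : s ∈ P.valueGroup) {c : K} (hc : c ≠ 0 → s ≤ P.val c) :
    P.reduceAt s c = P.res (P.t (-s) * c) := by
  rcases eq_or_ne c 0 with rfl | hc0
  · rw [reduceAt_zero, mul_zero, P.res_zero]
  rcases eq_or_lt_of_le (hc hc0) with rfl | hlt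
  · exact P.reduceAt_of_val_eq hc0 rfl
  obtain ⟨h, hv⟩ := P.val_t_mul (P.valueGroup.neg_mem hs) hc0
  rw [P.reduceAt_of_val_ne hlt.ne', eq_comm, P.res_eq_zero_iff h (by linarith), hv]
  linarith

lemma reduceAt_of_not_mem {s : ℝ} (hs : s ∉ P.valueGroup) (c : K) : P.reduceAt s c = 0 :=
  if_neg fun ⟨hc, h⟩ => hs (h ▸ P.val_mem_valueGroup hc)

lemma reduceAt_add {s : ℝ} {a b : K} (ha : a ≠ 0 → s ≤ P.val a) (hb : b ≠ 0 → s ≤ P.val b) :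
    P.reduceAt s (a + b) = P.reduceAt s a + P.reduceAt s b := by
  by_cases hs : s ∈ P.valueGroup
  · have hpos {c : K} (hc : c ≠ 0 → s ≤ P.val c) : P.t (-s) * c = 0 ∨ 0 ≤ P.val (P.t (-s) * c) := by
      rcases eq_or_ne c 0 with rfl | hc0
      · exact .inl (mul_zero _)
      · rw [(P.val_t_mul (P.valueGroup.neg_mem hs) hc0).2]
        exact .inr (by linarith [hc hc0])
    rw [P.reduceAt_eq_res hs ha, P.reduceAt_eq_res hs hb, P.reduceAt_eq_res hs (P.le_val_add ha hb),
      mul_add, P.res_add (hpos ha) (hpos hb)]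
  · simp only [P.reduceAt_of_not_mem hs, add_zero]

lemma reduceAt_sum {ι : Type*} (S : Finset ι) (g : ι → K) {s : ℝ}
    (h : ∀ i ∈ S, g i ≠ 0 → s ≤ P.val (g i)) :
    P.reduceAt s (∑ i ∈ S, g i) = ∑ i ∈ S, P.reduceAt s (g i) := by
  classical
  induction S using Finset.induction_on with
  | empty => simp [reduceAt_zero]
  | insert i S hi ih =>
    have hS : ∀ j ∈ S, g j ≠ 0 → s ≤ P.val (g j) := fun j hj => h j (Finset.mem_insert_of_mem hj)
    rw [Finset.sum_insert hi, Finset.sum_insert hi,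
      P.reduceAt_add (h i (S.mem_insert_self i)) (P.le_val_sum S g hS), ih hS]

lemma reduceAt_val_mul {a : K} (ha : a ≠ 0) (s : ℝ) (b : K) :
    P.reduceAt (P.val a + s) (a * b) = P.initCoeff a * P.reduceAt s b := by
  rcases eq_or_ne b 0 with rfl | hb
  · rw [mul_zero, reduceAt_zero, reduceAt_zero, mul_zero]
  by_cases h : P.val b = s
  · rw [P.reduceAt_of_val_eq hb h, P.reduceAt_of_val_eq (mul_ne_zero ha hb)
      (by rw [P.val_mul ha hb, h]), P.initCoeff_mul]
  · rw [P.reduceAt_of_val_ne h, mul_zero, P.reduceAt_of_val_ne]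
    rw [P.val_mul ha hb]
    exact fun h' => h (by linarith)

lemma reduceAt_mul {s s' : ℝ} {a b : K} (ha : a ≠ 0 → s ≤ P.val a) (hb : b ≠ 0 → s' ≤ P.val b) :
    P.reduceAt (s + s') (a * b) = P.reduceAt s a * P.reduceAt s' b := by
  rcases eq_or_ne a 0 with rfl | ha0
  · rw [zero_mul, reduceAt_zero, reduceAt_zero, zero_mul]
  by_cases h : P.val a = s
  · rw [← h, P.reduceAt_val_mul ha0, P.reduceAt_of_val_eq ha0 rfl]
  rcases eq_or_ne b 0 with rfl | hb0
  · rw [mul_zero, reduceAt_zero, reduceAt_zero, mul_zero]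
  rw [P.reduceAt_of_val_ne h, zero_mul, P.reduceAt_of_val_ne]
  rw [P.val_mul ha0 hb0]
  have := lt_of_le_of_ne (ha ha0) (Ne.symm h)
  linarith [hb hb0]

def trop (f : MvPolynomial (Fin m) K) (w : Fin m → ℝ) : ℝ :=
  sInf ((fun u => P.val (coeff u f) + dotN w u) '' (f.support : Set (Fin m →₀ ℕ)))

lemma trop_le {f : MvPolynomial (Fin m) K} {w : Fin m → ℝ} {u : Fin m →₀ ℕ}
    (h : coeff u f ≠ 0) : P.trop f w ≤ P.val (coeff u f) + dotN w u :=
  csInf_le (f.support.finite_toSet.image _).bddBelow ⟨u, mem_support_iff.mpr h, rfl⟩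

lemma exists_level_eq_trop {f : MvPolynomial (Fin m) K} (hf : f ≠ 0) (w : Fin m → ℝ) :
    ∃ u, coeff u f ≠ 0 ∧ P.val (coeff u f) + dotN w u = P.trop f w := by
  obtain ⟨u, hu, h⟩ := Set.Nonempty.csInf_mem
    ((Finset.coe_nonempty.mpr (support_nonempty.mpr hf)).image _)
    (f.support.finite_toSet.image fun u => P.val (coeff u f) + dotN w u)
  exact ⟨u, mem_support_iff.mp hu, h⟩

lemma trop_eq_of {f : MvPolynomial (Fin m) K} {w : Fin m → ℝ} {τ : ℝ}
    (h₁ : ∃ u, coeff u f ≠ 0 ∧ P.val (coeff u f) + dotN w u = τ)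
    (h₂ : ∀ u, coeff u f ≠ 0 → τ ≤ P.val (coeff u f) + dotN w u) : P.trop f w = τ := by
  obtain ⟨u, hu, rfl⟩ := h₁
  obtain ⟨u', hu', h'⟩ := P.exists_level_eq_trop (ne_zero_iff.mpr ⟨u, hu⟩) w
  exact le_antisymm (P.trop_le hu) (h' ▸ h₂ u' hu')

lemma trop_mem_valueGroup {w : Fin m → ℝ} (hw : ∀ i, w i ∈ P.valueGroup)
    (f : MvPolynomial (Fin m) K) : P.trop f w ∈ P.valueGroup := by
  rcases eq_or_ne f 0 with rfl | hf
  · simp [trop, P.valueGroup.zero_mem]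
  obtain ⟨u, hu, h⟩ := P.exists_level_eq_trop hf w
  exact h ▸ P.valueGroup.add_mem (P.val_mem_valueGroup hu) (P.dotN_mem_valueGroup hw u)

def levelForm (w : Fin m → ℝ) (τ : ℝ) (f : MvPolynomial (Fin m) K) : MvPolynomial (Fin m) 𝕜 :=
  ∑ u ∈ f.support.filter (fun u => P.val (coeff u f) + dotN w u = τ),
    monomial u (P.initCoeff (coeff u f))

def initialForm (w : Fin m → ℝ) (f : MvPolynomial (Fin m) K) : MvPolynomial (Fin m) 𝕜 :=
  P.levelForm w (P.trop f w) f

def LevelGE (w : Fin m → ℝ) (τ : ℝ) (f : MvPolynomial (Fin m) K) : Prop :=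
  ∀ u, coeff u f ≠ 0 → τ - dotN w u ≤ P.val (coeff u f)

lemma coeff_levelForm (w : Fin m → ℝ) (τ : ℝ) (f : MvPolynomial (Fin m) K) (u : Fin m →₀ ℕ) :
    coeff u (P.levelForm w τ f) = P.reduceAt (τ - dotN w u) (coeff u f) := by
  classical
  simp only [levelForm, coeff_sum, coeff_monomial, Finset.sum_ite_eq', Finset.mem_filter,
    mem_support_iff, reduceAt, eq_sub_iff_add_eq]

lemma coeff_initialForm (w : Fin m → ℝ) (f : MvPolynomial (Fin m) K) (u : Fin m →₀ ℕ) :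
    coeff u (P.initialForm w f) = P.reduceAt (P.trop f w - dotN w u) (coeff u f) :=
  P.coeff_levelForm w _ f u

@[simp]
lemma levelForm_zero (w : Fin m → ℝ) (τ : ℝ) :
    P.levelForm w τ (0 : MvPolynomial (Fin m) K) = 0 := by
  ext u
  rw [P.coeff_levelForm, coeff_zero, coeff_zero, P.reduceAt_zero]

@[simp]
lemma initialForm_zero (w : Fin m → ℝ) : P.initialForm w (0 : MvPolynomial (Fin m) K) = 0 :=
  P.levelForm_zero w _

lemma levelGE_trop (w : Fin m → ℝ) (f : MvPolynomial (Fin m) K) : P.LevelGE w (P.trop f w) f :=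
  fun _ hu => by linarith [P.trop_le (w := w) hu]

lemma LevelGE.mono {P : SplitValuation K 𝕜} {w : Fin m → ℝ} {τ τ' : ℝ} {f : MvPolynomial (Fin m) K}
    (hf : P.LevelGE w τ f) (h : τ' ≤ τ) : P.LevelGE w τ' f :=
  fun u hu => by linarith [hf u hu]

lemma levelGE_sum {ι : Type*} {w : Fin m → ℝ} {τ : ℝ} (S : Finset ι)
    {F : ι → MvPolynomial (Fin m) K} (h : ∀ i ∈ S, P.LevelGE w τ (F i)) :
    P.LevelGE w τ (∑ i ∈ S, F i) := fun u hu => by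
  rw [coeff_sum] at hu ⊢
  exact P.le_val_sum S _ (fun i hi => h i hi u) hu

lemma levelForm_sum {ι : Type*} {w : Fin m → ℝ} {τ : ℝ} (S : Finset ι)
    {F : ι → MvPolynomial (Fin m) K} (h : ∀ i ∈ S, P.LevelGE w τ (F i)) :
    P.levelForm w τ (∑ i ∈ S, F i) = ∑ i ∈ S, P.levelForm w τ (F i) := by
  ext u
  simp only [P.coeff_levelForm, coeff_sum]
  exact P.reduceAt_sum S _ fun i hi => h i hi u

lemma levelGE_C_mul {w : Fin m → ℝ} {τ : ℝ} {f : MvPolynomial (Fin m) K}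
    (hf : P.LevelGE w τ f) {c : K} (hc : c ≠ 0) : P.LevelGE w (P.val c + τ) (C c * f) :=
  fun u hu => by
    rw [coeff_C_mul] at hu ⊢
    rw [P.val_mul hc (right_ne_zero_of_mul hu)]
    linarith [hf u (right_ne_zero_of_mul hu)]

lemma levelForm_C_mul (w : Fin m → ℝ) (τ : ℝ) {c : K} (hc : c ≠ 0) (f : MvPolynomial (Fin m) K) :
    P.levelForm w (P.val c + τ) (C c * f) = P.initCoeff c • P.levelForm w τ f := by
  ext u
  rw [P.coeff_levelForm, coeff_C_mul, coeff_smul, P.coeff_levelForm, smul_eq_mul,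
    ← P.reduceAt_val_mul hc, add_sub_assoc]

lemma levelForm_eq_zero_of_lt_trop {w : Fin m → ℝ} {τ : ℝ} {f : MvPolynomial (Fin m) K}
    (h : τ < P.trop f w) : P.levelForm w τ f = 0 := by
  ext u
  rw [P.coeff_levelForm, coeff_zero]
  by_contra hne
  obtain ⟨hc, hv⟩ := P.reduceAt_ne_zero_iff.mp hne
  linarith [P.trop_le (w := w) hc]

lemma initialForm_eq_levelForm {w : Fin m → ℝ} {τ : ℝ} {f : MvPolynomial (Fin m) K}
    (hf : P.LevelGE w τ f) (h : P.levelForm w τ f ≠ 0) :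
    P.initialForm w f = P.levelForm w τ f := by
  obtain ⟨u, hu⟩ := support_nonempty.mpr h
  rw [mem_support_iff, P.coeff_levelForm] at hu
  obtain ⟨hc, hv⟩ := P.reduceAt_ne_zero_iff.mp hu
  rw [initialForm, P.trop_eq_of (τ := τ) ⟨u, hc, by linarith⟩ fun u hu => by linarith [hf u hu]]

lemma mem_support_initialForm {w : Fin m → ℝ} {f : MvPolynomial (Fin m) K} {u : Fin m →₀ ℕ} :
    u ∈ (P.initialForm w f).support ↔
      u ∈ f.support ∧ IsMinOn (fun u => P.val (coeff u f) + dotN w u) f.support u := by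
  rw [mem_support_iff, P.coeff_initialForm, P.reduceAt_ne_zero_iff, mem_support_iff, isMinOn_iff]
  refine and_congr_right fun hu => ⟨fun h u' hu' => ?_, fun h => ?_⟩
  · linarith [P.trop_le (w := w) (mem_support_iff.mp hu')]
  · obtain ⟨u', hu', h'⟩ := P.exists_level_eq_trop (ne_zero_iff.mpr ⟨u, hu⟩) w
    linarith [P.trop_le (w := w) hu, h u' (mem_support_iff.mpr hu')]

lemma coeff_initialForm_of_mem {w : Fin m → ℝ} {f : MvPolynomial (Fin m) K} {u : Fin m →₀ ℕ}
    (hu : u ∈ (P.initialForm w f).support) :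
    coeff u (P.initialForm w f) = P.initCoeff (coeff u f) := by
  rw [mem_support_iff, P.coeff_initialForm] at hu
  obtain ⟨hc, hv⟩ := P.reduceAt_ne_zero_iff.mp hu
  rw [P.coeff_initialForm, P.reduceAt_of_val_eq hc hv]

lemma coeff_initialForm_eq_ite (w : Fin m → ℝ) (f : MvPolynomial (Fin m) K) (u : Fin m →₀ ℕ) :
    coeff u (P.initialForm w f) =
      if u ∈ f.support ∧ IsMinOn (fun u => P.val (coeff u f) + dotN w u) f.support u
      then P.initCoeff (coeff u f) else 0 := by
  split_ifs with h
  · exact P.coeff_initialForm_of_mem (P.mem_support_initialForm.mpr h)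
  · exact notMem_support_iff.mp fun h' => h (P.mem_support_initialForm.mp h')

lemma initialForm_ne_zero {f : MvPolynomial (Fin m) K} (hf : f ≠ 0) (w : Fin m → ℝ) :
    P.initialForm w f ≠ 0 := by
  obtain ⟨u, hu, h⟩ := P.exists_level_eq_trop hf w
  refine ne_zero_iff.mpr ⟨u, ?_⟩
  rw [P.coeff_initialForm, P.reduceAt_of_val_eq hu (by linarith)]
  exact P.initCoeff_ne_zero hu

lemma isHomogeneous_initialForm {w : Fin m → ℝ} {f : MvPolynomial (Fin m) K} {d : ℕ}
    (hf : f.IsHomogeneous d) : (P.initialForm w f).IsHomogeneous d := fun _ hu =>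
  hf (mem_support_iff.mp (P.mem_support_initialForm.mp (mem_support_iff.mpr hu)).1)

lemma initialForm_mul {f g : MvPolynomial (Fin m) K} (hf : f ≠ 0) (hg : g ≠ 0)
    (w : Fin m → ℝ) : P.initialForm w (f * g) = P.initialForm w f * P.initialForm w g := by
  classical
  have hterm : ∀ u, ∀ p ∈ Finset.HasAntidiagonal.antidiagonal u, coeff p.1 f * coeff p.2 g ≠ 0 →
      P.trop f w + P.trop g w - dotN w u ≤ P.val (coeff p.1 f * coeff p.2 g) := by
    intro u p hp hne
    rw [← Finset.HasAntidiagonal.mem_antidiagonal.mp hp, dotN_add,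
      P.val_mul (left_ne_zero_of_mul hne) (right_ne_zero_of_mul hne)]
    linarith [P.trop_le (w := w) (left_ne_zero_of_mul hne),
      P.trop_le (w := w) (right_ne_zero_of_mul hne)]
  have hlevel : P.LevelGE w (P.trop f w + P.trop g w) (f * g) := fun u hu => by
    rw [coeff_mul] at hu ⊢
    exact P.le_val_sum _ _ (hterm u) hu
  have hprod : P.levelForm w (P.trop f w + P.trop g w) (f * g) =
      P.initialForm w f * P.initialForm w g := by
    ext u
    rw [P.coeff_levelForm, coeff_mul, coeff_mul, P.reduceAt_sum _ _ (hterm u)]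
    refine Finset.sum_congr rfl fun p hp => ?_
    rw [P.coeff_initialForm, P.coeff_initialForm, ← P.reduceAt_mul (P.levelGE_trop w f p.1)
      (P.levelGE_trop w g p.2), ← Finset.HasAntidiagonal.mem_antidiagonal.mp hp, dotN_add]
    congr 1
    ring
  rw [P.initialForm_eq_levelForm hlevel
    (hprod ▸ mul_ne_zero (P.initialForm_ne_zero hf w) (P.initialForm_ne_zero hg w)), hprod]

lemma initialForm_monomial_one (w : Fin m → ℝ) (a : Fin m →₀ ℕ) :
    P.initialForm w (monomial a (1 : K)) = monomial a 1 := by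
  classical
  have hlevel : P.levelForm w (dotN w a) (monomial a (1 : K)) = monomial a 1 := by
    ext u
    rw [P.coeff_levelForm, coeff_monomial, coeff_monomial]
    split_ifs with h
    · rw [h, sub_self, P.reduceAt_of_val_eq one_ne_zero P.val_one, P.initCoeff_one]
    · exact P.reduceAt_zero _
  refine (P.initialForm_eq_levelForm (fun u hu => ?_) ?_).trans hlevel
  · rw [coeff_monomial] at hu ⊢
    split_ifs at hu ⊢ with h
    exacts [by rw [h, P.val_one, sub_self], absurd rfl hu]
  · rw [hlevel, Ne, monomial_eq_zero]
    exact one_ne_zero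

lemma initialForm_monomial_mul (w : Fin m → ℝ) (a : Fin m →₀ ℕ) (f : MvPolynomial (Fin m) K) :
    P.initialForm w (monomial a 1 * f) = monomial a 1 * P.initialForm w f := by
  rcases eq_or_ne f 0 with rfl | hf
  · simp
  rw [P.initialForm_mul (by simp) hf, P.initialForm_monomial_one]

lemma trivial_initialForm (v : Fin m → ℝ) (g : MvPolynomial (Fin m) 𝕜) :
    (trivial 𝕜).initialForm v g = initialFormTriv v g := by
  simp only [initialForm, levelForm, trop, trivial_initCoeff, initialFormTriv, tropTriv]
  simp only [trivial, zero_add]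
  exact Finset.sum_congr (Finset.filter_congr fun _ _ => Iff.rfl) fun _ _ => rfl

lemma eventually_initialForm_add_smul (w v : Fin m → ℝ) (f : MvPolynomial (Fin m) K) :
    ∀ᶠ ε in 𝓝[>] (0 : ℝ),
      P.initialForm (w + ε • v) f = (trivial 𝕜).initialForm v (P.initialForm w f) := by
  filter_upwards [eventually_isMinOn_add_mul_iff f.support
    (fun u => P.val (coeff u f) + dotN w u) (dotN v)] with ε hε
  have hsupp : {y | y ∈ f.support ∧
      IsMinOn (fun u => P.val (coeff u f) + dotN w u) f.support y} =
      ((P.initialForm w f).support : Set (Fin m →₀ ℕ)) :=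
    Set.ext fun _ => P.mem_support_initialForm.symm
  ext u
  rw [coeff_initialForm_eq_ite, coeff_initialForm_eq_ite, P.coeff_initialForm_eq_ite]
  simp only [dotN_add_smul, ← add_assoc, trivial_val, zero_add, trivial_initCoeff]
  by_cases hu : u ∈ f.support
  · by_cases hA : IsMinOn (fun u => P.val (coeff u f) + dotN w u) f.support u
    · have hu' := P.mem_support_initialForm.mpr ⟨hu, hA⟩
      simp only [hu, hA, hu', hε u hu, ← hsupp, true_and, if_true]
    · simp only [hu, hA, hε u hu, true_and, false_and, if_false, ite_self]
  · simp only [hu, false_and, if_false, ite_self]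

def initialIdeal (w : Fin m → ℝ) (I : Ideal (MvPolynomial (Fin m) K)) :
    Ideal (MvPolynomial (Fin m) 𝕜) :=
  Ideal.span (P.initialForm w '' I)

/-- Since `x^a in_w(f) = in_w(x^a f)`, the initial ideal is already spanned over `𝕜`. -/
lemma restrictScalars_initialIdeal (w : Fin m → ℝ) (I : Ideal (MvPolynomial (Fin m) K)) :
    (P.initialIdeal w I).restrictScalars 𝕜 = Submodule.span 𝕜 (P.initialForm w '' I) := by
  set N := Submodule.span 𝕜 (P.initialForm w '' I)
  have hmonomial (a : Fin m →₀ ℕ) {y} (hy : y ∈ N) : monomial a 1 * y ∈ N := by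
    induction hy using Submodule.span_induction with
    | mem _ hy =>
      obtain ⟨f, hf, rfl⟩ := hy
      rw [← P.initialForm_monomial_mul]
      exact Submodule.subset_span ⟨_, I.mul_mem_left _ hf, rfl⟩
    | zero => simp
    | add _ _ _ _ h₁ h₂ => simpa [mul_add] using N.add_mem h₁ h₂
    | smul c _ _ h => simpa [mul_smul_comm] using N.smul_mem c h
  have hmul (r : MvPolynomial (Fin m) 𝕜) {y} (hy : y ∈ N) : r * y ∈ N := by
    induction r using MvPolynomial.induction_on' with
    | monomial a c =>
      rw [← mul_one c, ← C_mul_monomial, mul_assoc, ← smul_eq_C_mul]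
      exact N.smul_mem c (hmonomial a hy)
    | add r s hr hs => simpa [add_mul] using N.add_mem hr hs
  refine le_antisymm (fun x hx => ?_) (Submodule.span_le.mpr fun x hx => Ideal.subset_span hx)
  induction hx using Submodule.span_induction with
  | mem _ hx => exact Submodule.subset_span hx
  | zero => exact N.zero_mem
  | add _ _ _ _ h₁ h₂ => exact N.add_mem h₁ h₂
  | smul r _ _ h => exact hmul r h

lemma homogeneousComponent_initialForm (w : Fin m → ℝ) (f : MvPolynomial (Fin m) K) (d : ℕ) :
    homogeneousComponent d (P.initialForm w f) = 0 ∨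
      homogeneousComponent d (P.initialForm w f) = P.initialForm w (homogeneousComponent d f) := by
  by_cases h : ∃ u ∈ (P.initialForm w f).support, u.degree = d
  · right
    obtain ⟨u, hu, hud⟩ := h
    rw [mem_support_iff, P.coeff_initialForm] at hu
    obtain ⟨hc, hv⟩ := P.reduceAt_ne_zero_iff.mp hu
    have htrop : P.trop (homogeneousComponent d f) w = P.trop f w := by
      refine P.trop_eq_of ⟨u, ?_, ?_⟩ fun u' hu' => ?_
      · rwa [coeff_homogeneousComponent, if_pos hud]
      · rw [coeff_homogeneousComponent, if_pos hud]
        linarith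
      · rw [coeff_homogeneousComponent] at hu' ⊢
        split_ifs at hu' ⊢
        exacts [P.trop_le hu', absurd rfl hu']
    ext u'
    rw [coeff_homogeneousComponent, P.coeff_initialForm, P.coeff_initialForm, htrop,
      coeff_homogeneousComponent]
    split_ifs
    exacts [rfl, (P.reduceAt_zero _).symm]
  · left
    ext u
    rw [coeff_homogeneousComponent, coeff_zero]
    split_ifs with hud
    · exact notMem_support_iff.mp fun hu => h ⟨u, hu, hud⟩
    · rfl

lemma homogeneousComponent_mem_span_initialForm {I : Ideal (MvPolynomial (Fin m) K)}
    (hI : IsHomogIdeal I) {w : Fin m → ℝ} {x : MvPolynomial (Fin m) 𝕜}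
    (hx : x ∈ P.initialIdeal w I) (d : ℕ) :
    homogeneousComponent d x ∈
      Submodule.span 𝕜 (P.initialForm w '' homogeneousPiece I d) := by
  rw [← Submodule.restrictScalars_mem 𝕜, restrictScalars_initialIdeal] at hx
  have hmap := Submodule.mem_map_of_mem (f := homogeneousComponent d) hx
  rw [Submodule.map_span] at hmap
  refine Submodule.span_mono ?_ hmap
  rintro _ ⟨_, ⟨f, hf, rfl⟩, rfl⟩
  rcases P.homogeneousComponent_initialForm w f d with h | h
  · exact ⟨0, (homogeneousPiece I d).zero_mem, by rw [initialForm_zero]; exact h.symm⟩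
  · exact ⟨_, ⟨hI f hf d, homogeneousComponent_isHomogeneous d f⟩, h.symm⟩

lemma homogeneousPiece_initialIdeal {I : Ideal (MvPolynomial (Fin m) K)} (hI : IsHomogIdeal I)
    (w : Fin m → ℝ) (d : ℕ) :
    homogeneousPiece (P.initialIdeal w I) d =
      Submodule.span 𝕜 (P.initialForm w '' homogeneousPiece I d) := by
  refine le_antisymm (fun x hx => ?_) (Submodule.span_le.mpr ?_)
  · rw [← homogeneousComponent_eq_self hx.2]
    exact P.homogeneousComponent_mem_span_initialForm hI hx.1 d
  · rintro _ ⟨f, hf, rfl⟩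
    exact ⟨Ideal.subset_span ⟨f, hf.1, rfl⟩, P.isHomogeneous_initialForm hf.2⟩

lemma isHomogIdeal_initialIdeal {I : Ideal (MvPolynomial (Fin m) K)} (hI : IsHomogIdeal I)
    (w : Fin m → ℝ) : IsHomogIdeal (P.initialIdeal w I) := fun x hx d => by
  have h := P.homogeneousComponent_mem_span_initialForm hI hx d
  rw [← P.homogeneousPiece_initialIdeal hI] at h
  exact h.1

/-- In a nontrivial relation, the terms of minimal level give a relation between the initial
forms. -/
lemma linearIndependent_of_initialForm {ι : Type*} {w : Fin m → ℝ}
    {F : ι → MvPolynomial (Fin m) K} (h : LinearIndependent 𝕜 fun i => P.initialForm w (F i)) :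
    LinearIndependent K F := by
  classical
  rw [linearIndependent_iff']
  intro s g hsum i hi
  by_contra hgi
  set S := s.filter (g · ≠ 0)
  set level := fun i => P.val (g i) + P.trop (F i) w
  obtain ⟨j, hjS, hj⟩ := S.exists_min_image level ⟨i, Finset.mem_filter.mpr ⟨hi, hgi⟩⟩
  have hgS : ∀ i ∈ S, g i ≠ 0 := fun i hi => (Finset.mem_filter.mp hi).2
  have hsumS : ∑ i ∈ S, C (g i) * F i = 0 := by
    simp only [← smul_eq_C_mul]
    exact (Finset.sum_filter_of_ne (p := (g · ≠ 0)) fun i _ h hg => h (by rw [hg, zero_smul])).trans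
      hsum
  have hterm : ∀ i ∈ S, P.levelForm w (level j) (C (g i) * F i) =
      if level i = level j then P.initCoeff (g i) • P.initialForm w (F i) else 0 := by
    intro i hi
    have hC := P.levelForm_C_mul w (level j - P.val (g i)) (hgS i hi) (F i)
    rw [add_sub_cancel] at hC
    rw [hC]
    split_ifs with hij
    · rw [← hij, add_sub_cancel_left]
      rfl
    · rw [P.levelForm_eq_zero_of_lt_trop (lt_of_le_of_ne (by linarith [hj i hi])
        fun h => hij (by simp only [level]; linarith)), smul_zero]
  have hrel := P.levelForm_sum (w := w) (τ := level j) S fun i hi =>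
    (P.levelGE_C_mul (P.levelGE_trop w (F i)) (hgS i hi)).mono (hj i hi)
  rw [hsumS, Finset.sum_congr rfl hterm, ← Finset.sum_filter] at hrel
  have hfilter : j ∈ S.filter fun i => level i = level j := Finset.mem_filter.mpr ⟨hjS, rfl⟩
  exact P.initCoeff_ne_zero (hgS j hjS)
    (linearIndependent_iff'.mp h _ _ (by rw [← hrel, levelForm_zero]) j hfilter)

lemma finrank_span_initialForm_le (w : Fin m → ℝ) (W : Submodule K (MvPolynomial (Fin m) K))
    [FiniteDimensional K W] :
    Module.finrank 𝕜 (Submodule.span 𝕜 (P.initialForm w '' W)) ≤ Module.finrank K W := by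
  classical
  obtain ⟨b, hb, hspan, hli⟩ := exists_linearIndependent 𝕜 (P.initialForm w '' W)
  choose F hFW hF using fun x : b => hb x.2
  have hFindep : LinearIndependent K F := P.linearIndependent_of_initialForm (w := w) (by
    rwa [show (fun x : b => P.initialForm w (F x)) = Subtype.val from funext hF])
  have hFli : LinearIndependent K fun x : b => (⟨F x, hFW x⟩ : W) := .of_comp W.subtype hFindep
  have := hFli.finite
  have := Fintype.ofFinite b
  rw [← hspan, finrank_span_set_eq_card hli, Set.toFinset_card]
  exact hFli.fintype_card_le_finrank

lemma span_initialForm_le_homogeneousSubmodule (w : Fin m → ℝ) {d : ℕ}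
    {W : Submodule K (MvPolynomial (Fin m) K)} (hW : W ≤ homogeneousSubmodule (Fin m) K d) :
    Submodule.span 𝕜 (P.initialForm w '' W) ≤ homogeneousSubmodule (Fin m) 𝕜 d :=
  Submodule.span_le.mpr <| Set.image_subset_iff.mpr fun _ hf => P.isHomogeneous_initialForm (hW hf)

/-- Cutting `W` by the hyperplane `coeff u = 0`, for `u` in the support of a nonzero initial form,
lowers `dim W` by at most one and the dimension of the span of initial forms strictly. -/
lemma finrank_le_finrank_span_initialForm (w : Fin m → ℝ) {d : ℕ}
    {W : Submodule K (MvPolynomial (Fin m) K)} (hW : W ≤ homogeneousSubmodule (Fin m) K d) :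
    Module.finrank K W ≤ Module.finrank 𝕜 (Submodule.span 𝕜 (P.initialForm w '' W)) := by
  induction hn : Module.finrank 𝕜 (Submodule.span 𝕜 (P.initialForm w '' W))
    using Nat.strong_induction_on generalizing W with
  | _ n ih =>
  have := Submodule.finiteDimensional_of_le hW
  have := Submodule.finiteDimensional_of_le (P.span_initialForm_le_homogeneousSubmodule w hW)
  rcases eq_or_ne W ⊥ with rfl | hW0
  · simp
  obtain ⟨f, hfW, hf⟩ := Submodule.exists_mem_ne_zero_of_ne_bot hW0
  obtain ⟨u, hu⟩ := ne_zero_iff.mp (P.initialForm_ne_zero hf w)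
  set W' := W ⊓ LinearMap.ker (lcoeff K u)
  have hW' : W' ≤ homogeneousSubmodule (Fin m) K d := inf_le_left.trans hW
  have hlt : Submodule.span 𝕜 (P.initialForm w '' W') <
      Submodule.span 𝕜 (P.initialForm w '' W) := by
    refine lt_of_le_of_lt (b := Submodule.span 𝕜 (P.initialForm w '' W) ⊓
      LinearMap.ker (lcoeff 𝕜 u)) (le_inf (Submodule.span_mono (Set.image_mono inf_le_left)) ?_)
      (inf_lt_left.mpr fun h => hu (h (Submodule.subset_span ⟨f, hfW, rfl⟩)))
    refine Submodule.span_le.mpr ?_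
    rintro _ ⟨f', hf', rfl⟩
    have hcoeff : coeff u f' = 0 := LinearMap.mem_ker.mp (Submodule.mem_inf.mp hf').2
    change coeff u (P.initialForm w f') = 0
    rw [P.coeff_initialForm, hcoeff, P.reduceAt_zero]
  have hW'n : Module.finrank K W ≤ Module.finrank K W' + 1 :=
    finrank_le_finrank_inf_ker_add_one W (lcoeff K u)
  have hlt' := hn ▸ Submodule.finrank_lt_finrank_of_lt hlt
  have := ih _ hlt' hW' rfl
  omega

lemma finrank_span_initialForm (w : Fin m → ℝ) {d : ℕ}
    {W : Submodule K (MvPolynomial (Fin m) K)} (hW : W ≤ homogeneousSubmodule (Fin m) K d) :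
    Module.finrank 𝕜 (Submodule.span 𝕜 (P.initialForm w '' W)) = Module.finrank K W :=
  have := Submodule.finiteDimensional_of_le hW
  le_antisymm (P.finrank_span_initialForm_le w W) (P.finrank_le_finrank_span_initialForm w hW)

lemma finrank_homogeneousPiece_initialIdeal {I : Ideal (MvPolynomial (Fin m) K)}
    (hI : IsHomogIdeal I) (w : Fin m → ℝ) (d : ℕ) :
    Module.finrank 𝕜 (homogeneousPiece (P.initialIdeal w I) d) =
      Module.finrank K (homogeneousPiece I d) := by
  rw [P.homogeneousPiece_initialIdeal hI,
    P.finrank_span_initialForm w (W := homogeneousPiece I d) inf_le_right]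

lemma exists_initCoeff_eq (hres : P.ResSurjective) {c : 𝕜} (hc : c ≠ 0) {r : ℝ}
    (hr : r ∈ P.valueGroup) :
    ∃ b : K, b ≠ 0 ∧ P.val b = r ∧ P.initCoeff b = c := by
  obtain ⟨a, ha, rfl⟩ := hres c
  have ha0 : a ≠ 0 := by
    rintro rfl
    exact hc P.res_zero
  have hva : P.val a = 0 :=
    (ha.resolve_left ha0).antisymm' (not_lt.mp fun h => hc ((P.res_eq_zero_iff ha0 h.le).mpr h))
  obtain ⟨hb, hvb⟩ := P.val_t_mul hr ha0
  refine ⟨P.t r * a, hb, by rw [hvb, hva, add_zero], ?_⟩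
  rw [initCoeff, hvb, hva, add_zero, ← mul_assoc, mul_comm (P.t (-r)), P.t_mul_t_neg hr, one_mul]

lemma exists_levelForm_C_mul_eq (hres : P.ResSurjective) {w : Fin m → ℝ}
    (hw : ∀ i, w i ∈ P.valueGroup) (f : MvPolynomial (Fin m) K) (c : 𝕜) :
    ∃ b : K, P.LevelGE w 0 (C b * f) ∧ P.levelForm w 0 (C b * f) = c • P.initialForm w f := by
  rcases eq_or_ne c 0 with rfl | hc
  · exact ⟨0, fun u hu => (hu (by simp)).elim, by simp⟩
  obtain ⟨b, hb, hvb, hcb⟩ :=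
    P.exists_initCoeff_eq hres hc (P.valueGroup.neg_mem (P.trop_mem_valueGroup hw f))
  have h0 : P.val b + P.trop f w = 0 := by rw [hvb, neg_add_cancel]
  refine ⟨b, h0 ▸ P.levelGE_C_mul (P.levelGE_trop w f) hb, ?_⟩
  rw [← h0, P.levelForm_C_mul w _ hb, hcb]
  rfl

/-- Write `g = ∑ cᵢ in_w(fᵢ)` and lift it to `∑ bᵢ fᵢ`, where `val bᵢ = -trop fᵢ` (possible as
`trop fᵢ ∈ Γ`) and `bᵢ` has leading coefficient `cᵢ`. -/
lemma exists_initialForm_eq (hres : P.ResSurjective) {w : Fin m → ℝ}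
    (hw : ∀ i, w i ∈ P.valueGroup) {I : Ideal (MvPolynomial (Fin m) K)}
    {g : MvPolynomial (Fin m) 𝕜}
    (hg : g ∈ P.initialIdeal w I) : ∃ f ∈ I, P.initialForm w f = g := by
  rw [← Submodule.restrictScalars_mem 𝕜, restrictScalars_initialIdeal, Submodule.mem_span_set']
    at hg
  obtain ⟨n, c, x, hgx⟩ := hg
  choose f hfI hf using fun i => (x i).2
  choose b hbGE hb using fun i => P.exists_levelForm_C_mul_eq hres hw (f i) (c i)
  rcases eq_or_ne g 0 with rfl | hg0
  · exact ⟨0, I.zero_mem, P.initialForm_zero w⟩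
  have hlevel : P.levelForm w 0 (∑ i, C (b i) * f i) = g := by
    rw [P.levelForm_sum _ fun i _ => hbGE i, ← hgx]
    simp only [hb, hf]
  refine ⟨∑ i, C (b i) * f i, I.sum_mem fun i _ => I.mul_mem_left _ (hfI i), ?_⟩
  rw [P.initialForm_eq_levelForm (P.levelGE_sum _ fun i _ => hbGE i) (hlevel ▸ hg0), hlevel]

lemma eventually_initialIdeal_initialIdeal_le (hres : P.ResSurjective)
    {w : Fin m → ℝ} (hw : ∀ i, w i ∈ P.valueGroup)
    (v : Fin m → ℝ) (I : Ideal (MvPolynomial (Fin m) K)) :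
    ∀ᶠ ε in 𝓝[>] (0 : ℝ),
      (trivial 𝕜).initialIdeal v (P.initialIdeal w I) ≤ P.initialIdeal (w + ε • v) I := by
  set S := (fun f => (trivial 𝕜).initialForm v (P.initialForm w f)) '' I
  have hspan : (trivial 𝕜).initialIdeal v (P.initialIdeal w I) = Ideal.span S := by
    refine le_antisymm (Ideal.span_le.mpr ?_) (Ideal.span_mono ?_)
    · rintro _ ⟨g, hg, rfl⟩
      obtain ⟨f, hf, rfl⟩ := P.exists_initialForm_eq hres hw hg
      exact Ideal.subset_span ⟨f, hf, rfl⟩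
    · rintro _ ⟨f, hf, rfl⟩
      exact ⟨_, Ideal.subset_span ⟨f, hf, rfl⟩, rfl⟩
  obtain ⟨T, hTS, hT⟩ := (Submodule.fg_span_iff_fg_span_finset_subset S).mp
    (IsNoetherian.noetherian (Ideal.span S))
  have hgen : ∀ᶠ ε in 𝓝[>] (0 : ℝ), ∀ g ∈ T, g ∈ P.initialIdeal (w + ε • v) I :=
    (eventually_all_finset T).mpr fun g hg => by
      obtain ⟨f, hf, rfl⟩ := hTS hg
      filter_upwards [P.eventually_initialForm_add_smul w v f] with ε hε
      rw [← hε]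
      exact Ideal.subset_span ⟨f, hf, rfl⟩
  filter_upwards [hgen] with ε hε
  rw [hspan, Ideal.span, hT]
  exact Submodule.span_le.mpr hε

lemma initialIdeal_initialIdeal_eq_of_le {I : Ideal (MvPolynomial (Fin m) K)} (hI : IsHomogIdeal I)
    {w v w' : Fin m → ℝ}
    (hle : (trivial 𝕜).initialIdeal v (P.initialIdeal w I) ≤ P.initialIdeal w' I) :
    (trivial 𝕜).initialIdeal v (P.initialIdeal w I) = P.initialIdeal w' I :=
  eq_of_le_of_finrank_homogeneousPiece_le hle (P.isHomogIdeal_initialIdeal hI w') fun d => by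
    rw [P.finrank_homogeneousPiece_initialIdeal hI,
      (trivial 𝕜).finrank_homogeneousPiece_initialIdeal (P.isHomogIdeal_initialIdeal hI w),
      P.finrank_homogeneousPiece_initialIdeal hI]

end SplitValuation

lemma ValSetup.initialIdeal_eq {K 𝕜 : Type} [Field K] [Field 𝕜] (V : ValSetup K 𝕜) {m : ℕ}
    (w : Fin m → ℝ) (I : Ideal (MvPolynomial (Fin m) K)) :
    V.initialIdeal w I = V.toSplitValuation.initialIdeal w I :=
  congrArg Ideal.span <| Set.ext fun _ => ⟨fun ⟨f, hf, h⟩ => ⟨f, hf, h.symm⟩,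
    fun ⟨f, hf, h⟩ => ⟨f, hf, h.symm⟩⟩

lemma initialIdealTriv_eq {𝕜 : Type} [Field 𝕜] {m : ℕ} (v : Fin m → ℝ)
    (J : Ideal (MvPolynomial (Fin m) 𝕜)) :
    initialIdealTriv v J = (SplitValuation.trivial 𝕜).initialIdeal v J :=
  congrArg Ideal.span <| Set.ext fun _ => ⟨fun ⟨g, hg, h⟩ =>
    ⟨g, hg, (SplitValuation.trivial_initialForm v g).trans h.symm⟩,
    fun ⟨g, hg, h⟩ => ⟨g, hg, h.symm.trans (SplitValuation.trivial_initialForm v g)⟩⟩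

theorem initialIdeal_initialIdeal_general {K 𝕜 : Type} [Field K] [Field 𝕜] (V : ValSetup K 𝕜)
    {n : ℕ}
    (I : Ideal (MvPolynomial (Fin (n+1)) K)) (hI : IsHomogIdeal I)
    (w v : Fin (n+1) → ℝ) (hw : ∀ i, w i ∈ V.Gamma) :
    ∃ ε : ℝ, 0 < ε ∧ ∀ ε' : ℝ, ε' ∈ V.Gamma → 0 < ε' → ε' < ε →
      initialIdealTriv v (V.initialIdeal w I) = V.initialIdeal (w + ε' • v) I := by
  obtain ⟨ε, hε, hle⟩ := (nhdsGT_basis 0).eventually_iff.mp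
    (V.toSplitValuation.eventually_initialIdeal_initialIdeal_le V.res_surjective hw v I)
  refine ⟨ε, hε, fun ε' _ hpos hlt => ?_⟩
  rw [initialIdealTriv_eq, V.initialIdeal_eq, V.initialIdeal_eq]
  exact V.toSplitValuation.initialIdeal_initialIdeal_eq_of_le hI (hle ⟨hpos, hlt⟩)

/-- (Corollary 3.4.)  Let `I` be a homogeneous ideal in `K[x_0,…,x_n]` and `w, v ∈ Γ^{n+1}`.
Then there is `ε > 0` such that `in_v(in_w(I)) = in_{w+ε'v}(I)` for all `ε' ∈ Γ` with
`0 < ε' < ε`. -/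
theorem initialIdeal_initialIdeal {K 𝕜 : Type} [Field K] [Field 𝕜] (V : ValSetup K 𝕜)
    (hdense : Dense V.Gamma) (hQ : ∀ q : ℚ, (q : ℝ) ∈ V.Gamma) {n : ℕ}
    (I : Ideal (MvPolynomial (Fin (n+1)) K)) (hI : IsHomogIdeal I)
    (w v : Fin (n+1) → ℝ) (hw : ∀ i, w i ∈ V.Gamma) (hv : ∀ i, v i ∈ V.Gamma) :
    ∃ ε : ℝ, 0 < ε ∧ ∀ ε' : ℝ, ε' ∈ V.Gamma → 0 < ε' → ε' < ε →
      initialIdealTriv v (V.initialIdeal w I) = V.initialIdeal (w + ε' • v) I :=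
  initialIdeal_initialIdeal_general V I hI w v hw
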